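/- Let k > 0 and n ∈ ℕ. For each integer m ≥ 2, let Q_m be a polynomial of degree m satisfying -(1-x²)Q_m''(x) + k·Q_m(x) = (m(m-1)+k)·Q_m(x) and normalized so that ∫_{-1}^{1} |Q_m(x)|²(1-x²)^{-1}dx = 1. Then for all m, l ≥ 2: Σ_{j=0}^{n} c_j(n,k)·∫_{-1}^{1} Q_m^{(j)}(x)·Q̄_l^{(j)}(x)·(1-x²)^{j-1}dx = (m(m-1)+k)^n·δ_{ml}. -/

import Mathlib

open MeasureTheory Set

/-- The Jacobi–Stirling numbers `{m, j}₀`. -/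
noncomputable def jacobiStirling (m j : ℕ) : ℝ :=
  if j = 0 then (if m = 0 then 1 else 0)
  else if j = 1 then (if m = 1 then 1 else 0)
  else ∑ r ∈ Finset.Icc 2 j,
    (-1 : ℝ) ^ (r + j) * (2 * (r : ℝ) - 1) * (Nat.factorial (r - 2) : ℝ) *
        ((r * (r - 1) : ℕ) : ℝ) ^ m /
      ((Nat.factorial r : ℝ) * (Nat.factorial (j - r) : ℝ) *
        (Nat.factorial (j + r - 1) : ℝ))

/-- The left-definite coefficients `c_j(n,k)`. -/
noncomputable def cLD (n j : ℕ) (k : ℝ) : ℝ :=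
  if j = 0 then k ^ n
  else ∑ r ∈ Finset.range (n - j + 1), (n.choose r : ℝ) * jacobiStirling (n - r) j * k ^ r


/-!
Differentiating `(1 - x²) Q'' = -μ Q` (`μ = m(m-1)`) puts every derivative of `Q` in self-adjoint
form, `((1 - x²)^(j+1) Q^(j+2))' = ((j+1)j - μ) (1 - x²)^j Q^(j+1)`. Integrating this against
`conj Q_l^(j+1)` by parts (the boundary terms carry the factor `1 - x²`) shows that the `j`-th
integral is `∏_{i<j} (μ - i(i-1))` times the zeroth one. In the step from `0` to `1` the boundary
terms vanish because the eigenvalue equation forces `Q(±1) = 0`; the same step with `m` and `l`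
exchanged shows that the zeroth integral vanishes for `m ≠ l`, and for `m = l` it is the
normalization integral.

The sum then collapses because `{p, j}₀` are the coefficients of `x^p` in the Newton basis
`∏_{i<j} (x - i(i-1))`: for `p ≥ 2` the explicit formula is the Lagrange form
`Σ_r t_r^(p-2) / ∏_{s≠r} (t_r - t_s)` (`t_r = r(r-1)`, `2 ≤ r, s ≤ j`) of a divided difference,
which vanishes for `j > p` and satisfies the Newton recurrence. Hence
`Σ_j c_j(n,k) ∏_{i<j} (μ - i(i-1)) = Σ_r C(n,r) k^r μ^(n-r) = (μ + k)^n`.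
-/

open Finset Polynomial
open scoped Nat

noncomputable def jacobiNode (r : ℕ) : ℝ := r * (r - 1)

lemma natCast_mul_sub_one_eq_jacobiNode (r : ℕ) : ((r * (r - 1) : ℕ) : ℝ) = jacobiNode r := by
  cases r <;> simp [jacobiNode]

lemma jacobiNode_injOn : Set.InjOn jacobiNode (Set.Ici 1) := by
  intro r hr s hs h
  have hrs : ((r : ℝ) - s) * (r + s - 1) = 0 := by
    unfold jacobiNode at h; linear_combination h
  have hpos : (r : ℝ) + s - 1 ≠ 0 := by
    have : (1 : ℝ) ≤ r := by exact_mod_cast hr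
    have : (1 : ℝ) ≤ s := by exact_mod_cast hs
    linarith
  exact_mod_cast sub_eq_zero.1 ((mul_eq_zero.1 hrs).resolve_right hpos)

lemma jacobiNode_ne_zero {r : ℕ} (hr : 2 ≤ r) : jacobiNode r ≠ 0 := by
  have : (2 : ℝ) ≤ r := by exact_mod_cast hr
  exact (show 0 < jacobiNode r by unfold jacobiNode; nlinarith).ne'

lemma factorial_mul_prod_Ico_sub_jacobiNode {r : ℕ} (hr : 2 ≤ r) :
    (r ! : ℝ) * ∏ s ∈ Finset.Ico 2 r, (jacobiNode r - jacobiNode s) = (r - 2)! * (2 * r - 2)! := by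
  obtain ⟨a, rfl⟩ : ∃ a, r = a + 2 := ⟨r - 2, by omega⟩
  have hfac : ∀ i ∈ range a, jacobiNode (a + 2) - jacobiNode (2 + i) =
      ((a - i : ℕ) : ℝ) * ((a + 3 + i : ℕ) : ℝ) := by
    intro i hi
    rw [Nat.cast_sub (mem_range.1 hi).le]
    simp only [jacobiNode]; push_cast; ring
  rw [prod_Ico_eq_prod_range, Nat.add_sub_cancel, prod_congr rfl hfac, prod_mul_distrib,
    ← Nat.cast_prod, ← Nat.cast_prod, ← Nat.descFactorial_eq_prod_range, Nat.descFactorial_self,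
    ← Nat.ascFactorial_eq_prod_range, show 2 * (a + 2) - 2 = a + 2 + a by omega,
    ← Nat.factorial_mul_ascFactorial (a + 2) a]
  push_cast; ring_nf

lemma factorial_mul_prod_erase_Icc_sub_jacobiNode {r j : ℕ} (hr : 2 ≤ r) (hrj : r ≤ j) :
    (r ! : ℝ) * (2 * r - 1) * ∏ s ∈ (Finset.Icc 2 j).erase r, (jacobiNode r - jacobiNode s) =
      (-1) ^ (j - r) * (r - 2)! * (j - r)! * (j + r - 1)! := by
  induction j, hrj using Nat.le_induction with
  | base =>
    rw [Icc_erase_right, mul_right_comm, factorial_mul_prod_Ico_sub_jacobiNode hr,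
      Nat.sub_self, show r + r - 1 = (2 * r - 2) + 1 by omega, Nat.factorial_succ]
    push_cast [Nat.cast_sub (by omega : 2 ≤ 2 * r)]; ring
  | succ j hrj ih =>
    have hset : (Finset.Icc 2 (j + 1)).erase r = insert (j + 1) ((Finset.Icc 2 j).erase r) := by
      ext s; simp only [Finset.mem_erase, Finset.mem_Icc, Finset.mem_insert]; omega
    rw [hset, prod_insert (by simp), mul_left_comm, ih,
      show j + 1 - r = (j - r) + 1 by omega, show j + 1 + r - 1 = (j + r - 1) + 1 by omega,
      Nat.factorial_succ, Nat.factorial_succ, pow_succ]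
    simp only [jacobiNode]
    rw [show j + r - 1 + 1 = j + r by omega]
    push_cast [Nat.cast_sub hrj]
    ring

noncomputable def jacobiWeight (j r : ℕ) : ℝ :=
  (jacobiNode r ^ 2 * ∏ s ∈ (Finset.Icc 2 j).erase r, (jacobiNode r - jacobiNode s))⁻¹

lemma jacobiStirling_eq_sum_jacobiWeight (p j : ℕ) (hj : 2 ≤ j) :
    jacobiStirling p j = ∑ r ∈ Finset.Icc 2 j, jacobiWeight j r * jacobiNode r ^ p := by
  rw [jacobiStirling, if_neg (by omega), if_neg (by omega)]
  refine sum_congr rfl fun r hr => ?_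
  obtain ⟨hr2, hrj⟩ := mem_Icc.1 hr
  have hprod := factorial_mul_prod_erase_Icc_sub_jacobiNode hr2 hrj
  set D := ∏ s ∈ (Finset.Icc 2 j).erase r, (jacobiNode r - jacobiNode s)
  have hfac : (r ! : ℝ) = jacobiNode r * (r - 2)! := by
    obtain ⟨a, rfl⟩ : ∃ a, r = a + 2 := ⟨r - 2, by omega⟩
    simp only [jacobiNode, Nat.add_sub_cancel, Nat.factorial_succ]; push_cast; ring
  have hsign : (-1 : ℝ) ^ (r + j) = (-1) ^ (j - r) := by
    rw [show r + j = (j - r) + 2 * r by omega, pow_add, pow_mul]; norm_num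
  have hsign_sq : ((-1 : ℝ) ^ (j - r)) ^ 2 = 1 := by
    rw [← pow_mul, mul_comm, pow_mul]; norm_num
  have hD : D ≠ 0 := by
    rintro h
    rw [h, mul_zero] at hprod
    exact absurd hprod.symm (by positivity)
  have h2r : (2 * r - 1 : ℝ) ≠ 0 := by
    have : (2 : ℝ) ≤ r := by exact_mod_cast hr2
    linarith
  have hnode := jacobiNode_ne_zero hr2
  rw [jacobiWeight, natCast_mul_sub_one_eq_jacobiNode, hsign]
  field_simp
  rw [eq_div_iff hD, hfac]
  rw [hfac] at hprod
  linear_combination ((-1 : ℝ) ^ (j - r) * jacobiNode r) * hprod +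
    (jacobiNode r * (r - 2)! * (j - r)! * (j + r - 1)!) * hsign_sq

lemma jacobiStirling_eq_zero_of_lt {p j : ℕ} (hp : 2 ≤ p) (hpj : p < j) :
    jacobiStirling p j = 0 := by
  have hinj : Set.InjOn jacobiNode (Finset.Icc 2 j : Set ℕ) :=
    jacobiNode_injOn.mono fun r hr => by simp only [coe_Icc, Set.mem_Icc] at hr; simp; omega
  have hdeg : ((X : ℝ[X]) ^ (p - 2)).degree < #(Finset.Icc 2 j) := by
    rw [degree_X_pow, Nat.card_Icc]; exact_mod_cast (by omega : p - 2 < j + 1 - 2)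
  have hcoeff := Lagrange.coeff_eq_sum hinj hdeg
  rw [Nat.card_Icc, coeff_X_pow, if_neg (by omega)] at hcoeff
  rw [jacobiStirling_eq_sum_jacobiWeight p j (by omega), hcoeff]
  refine sum_congr rfl fun r hr => ?_
  have hnode := jacobiNode_ne_zero (Finset.mem_Icc.1 hr).1
  have hsplit : jacobiNode r ^ p = jacobiNode r ^ (p - 2) * jacobiNode r ^ 2 := by
    rw [← pow_add, Nat.sub_add_cancel hp]
  rw [jacobiWeight, eval_pow, eval_X, hsplit]
  field_simp

lemma jacobiWeight_eq_mul_jacobiWeight_succ {j r : ℕ} (hr : 2 ≤ r) (hrj : r ≤ j) :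
    jacobiWeight j r = (jacobiNode r - jacobiNode (j + 1)) * jacobiWeight (j + 1) r := by
  have hset : (Finset.Icc 2 (j + 1)).erase r = insert (j + 1) ((Finset.Icc 2 j).erase r) := by
    ext s; simp only [Finset.mem_erase, Finset.mem_Icc, Finset.mem_insert]; omega
  have hne : jacobiNode r - jacobiNode (j + 1) ≠ 0 :=
    sub_ne_zero.2 (jacobiNode_injOn.ne (by simp; omega) (by simp) (by omega))
  rw [jacobiWeight, jacobiWeight, hset, prod_insert (by simp), mul_left_comm, mul_inv,
    mul_inv, ← mul_assoc, mul_inv_cancel₀ hne, one_mul, mul_inv]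

lemma jacobiStirling_succ_succ {p : ℕ} (hp : 2 ≤ p) (j : ℕ) :
    jacobiStirling (p + 1) (j + 1) =
      jacobiNode (j + 1) * jacobiStirling p (j + 1) + jacobiStirling p j := by
  rcases j with _ | i
  · simp [jacobiStirling, jacobiNode]
  have htop : ∑ r ∈ Finset.Icc 2 (i + 1 + 1),
      jacobiWeight (i + 1 + 1) r * jacobiNode r ^ p * (jacobiNode r - jacobiNode (i + 1 + 1)) =
      ∑ r ∈ Finset.Icc 2 (i + 1), jacobiWeight (i + 1) r * jacobiNode r ^ p := by
    rw [Finset.sum_Icc_succ_top (by omega), sub_self, mul_zero, add_zero]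
    refine sum_congr rfl fun r hr => ?_
    obtain ⟨hr2, hri⟩ := Finset.mem_Icc.1 hr
    rw [jacobiWeight_eq_mul_jacobiWeight_succ hr2 hri]
    ring
  have hlow : jacobiStirling p (i + 1) =
      ∑ r ∈ Finset.Icc 2 (i + 1), jacobiWeight (i + 1) r * jacobiNode r ^ p := by
    rcases i with _ | i
    · simp [jacobiStirling]; omega
    · exact jacobiStirling_eq_sum_jacobiWeight p _ (by omega)
  rw [hlow, ← htop, jacobiStirling_eq_sum_jacobiWeight _ _ (by omega),
    jacobiStirling_eq_sum_jacobiWeight _ _ (by omega), mul_sum, ← sum_add_distrib]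
  refine sum_congr rfl fun r _ => ?_
  ring

lemma sum_jacobiStirling_mul_prod (p : ℕ) (x : ℝ) :
    ∑ j ∈ range (p + 1), jacobiStirling p j * ∏ i ∈ range j, (x - jacobiNode i) = x ^ p := by
  rcases (show p < 2 ∨ 2 ≤ p by omega) with hp | hp
  · interval_cases p <;> simp [sum_range_succ, jacobiStirling, jacobiNode]
  induction p, hp using Nat.le_induction with
  | base =>
    norm_num [sum_range_succ, prod_range_succ, jacobiStirling, jacobiNode, Nat.factorial]
    ring
  | succ p hp ih =>
    set N : ℕ → ℝ := fun j => ∏ i ∈ range j, (x - jacobiNode i)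
    have hshift : ∑ j ∈ range (p + 1), jacobiNode (j + 1) * jacobiStirling p (j + 1) * N (j + 1) =
        ∑ j ∈ range (p + 1), jacobiNode j * jacobiStirling p j * N j := by
      have h := sum_range_succ' (fun j => jacobiNode j * jacobiStirling p j * N j) (p + 1)
      rw [sum_range_succ, jacobiStirling_eq_zero_of_lt hp (by omega)] at h
      simpa [jacobiNode] using h.symm
    calc ∑ j ∈ range (p + 1 + 1), jacobiStirling (p + 1) j * N j
        = ∑ j ∈ range (p + 1), (jacobiNode (j + 1) * jacobiStirling p (j + 1) * N (j + 1) +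
            jacobiStirling p j * N (j + 1)) := by
          have h0 : jacobiStirling (p + 1) 0 = 0 := by simp [jacobiStirling]
          rw [sum_range_succ', h0, zero_mul, add_zero]
          exact sum_congr rfl fun j _ => by rw [jacobiStirling_succ_succ hp]; ring
      _ = ∑ j ∈ range (p + 1), jacobiStirling p j * N j * x := by
          rw [sum_add_distrib, hshift, ← sum_add_distrib]
          refine sum_congr rfl fun j _ => ?_
          simp only [N, prod_range_succ]
          ring
      _ = x ^ (p + 1) := by rw [← sum_mul, ih, pow_succ]

lemma cLD_eq_sum (n j : ℕ) (k : ℝ) :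
    cLD n j k = ∑ r ∈ range (n - j + 1), (n.choose r : ℝ) * jacobiStirling (n - r) j * k ^ r := by
  rcases j with _ | j
  · rw [cLD, if_pos rfl, Nat.sub_zero, sum_eq_single n (fun r hr hrn => ?_) (by simp)]
    · simp [jacobiStirling]
    · simp [jacobiStirling, show n - r ≠ 0 by simp at hr; omega]
  · rw [cLD, if_neg (by omega)]

lemma sum_cLD_mul_prod (n : ℕ) (k x : ℝ) :
    ∑ j ∈ range (n + 1), cLD n j k * ∏ i ∈ range j, (x - jacobiNode i) = (x + k) ^ n := by
  simp_rw [cLD_eq_sum, sum_mul]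
  rw [sum_comm' (t' := range (n + 1)) (s' := fun r => range (n - r + 1))
    (fun j r => by simp only [Finset.mem_range]; omega), add_comm x k, add_pow]
  refine sum_congr rfl fun r _ => ?_
  rw [← sum_jacobiStirling_mul_prod (n - r) x, mul_sum, sum_mul]
  exact sum_congr rfl fun j _ => by ring

lemma integrableOn_eval_ofReal (F : ℂ[X]) (a b : ℝ) :
    IntegrableOn (fun x : ℝ => F.eval (x : ℂ)) (Ioo a b) :=
  ((F.continuous.comp Complex.continuous_ofReal).integrableOn_Icc).mono_set Ioo_subset_Icc_self

lemma integral_Ioo_eval_derivative (F : ℂ[X]) {a b : ℝ} (hab : a ≤ b) :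
    ∫ x in Ioo a b, (derivative F).eval (x : ℂ) = F.eval (b : ℂ) - F.eval (a : ℂ) := by
  rw [← integral_Ioc_eq_integral_Ioo, ← intervalIntegral.integral_of_le hab]
  exact intervalIntegral.integral_eq_sub_of_hasDerivAt
    (fun x _ => (F.hasDerivAt (x : ℂ)).comp_ofReal)
    (((derivative F).continuous.comp Complex.continuous_ofReal).intervalIntegrable _ _)

lemma integral_Ioo_eval_mul_derivative (F G : ℂ[X]) {a b : ℝ} (hab : a ≤ b) :
    ∫ x in Ioo a b, (F * derivative G).eval (x : ℂ) =
      (F * G).eval (b : ℂ) - (F * G).eval (a : ℂ) -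
        ∫ x in Ioo a b, (derivative F * G).eval (x : ℂ) := by
  have h := integral_Ioo_eval_derivative (F * G) hab
  simp only [derivative_mul, eval_add] at h
  rw [integral_add (integrableOn_eval_ofReal _ a b) (integrableOn_eval_ofReal _ a b)] at h
  linear_combination h

lemma integral_Ioo_eval_C_mul (c : ℂ) (F : ℂ[X]) (a b : ℝ) :
    ∫ x in Ioo a b, (C c * F).eval (x : ℂ) = c * ∫ x in Ioo a b, F.eval (x : ℂ) := by
  simp only [eval_mul, eval_C]
  exact integral_const_mul c _

lemma star_eval_ofReal (S : ℂ[X]) (x : ℝ) :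
    star (S.eval (x : ℂ)) = (S.map (starRingEnd ℂ)).eval (x : ℂ) := by
  conv_rhs => rw [eval_map, ← Complex.conj_ofReal x, eval₂_at_apply]
  rfl

lemma iterate_derivative_ode {P : ℂ[X]} {μ : ℂ}
    (hP : (1 - X ^ 2) * derivative (derivative P) = -C μ * P) (j : ℕ) :
    (1 - X ^ 2) * derivative^[j + 2] P =
      C (2 * (j : ℂ)) * X * derivative^[j + 1] P + C (j * (j - 1) - μ) * derivative^[j] P := by
  induction j with
  | zero => simp [hP]
  | succ j ih =>
    have hd := congrArg derivative ih
    simp only [derivative_mul, derivative_one, derivative_pow,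
      derivative_X, derivative_C, derivative_natCast, derivative_ofNat,
      ← Function.iterate_succ_apply' derivative, Nat.succ_eq_add_one, map_add, map_sub, map_mul,
      map_natCast, map_ofNat, map_one] at hd ⊢
    push_cast at hd ⊢
    linear_combination hd

lemma derivative_one_sub_X_sq_pow_mul_iterate {P : ℂ[X]} {μ : ℂ}
    (hP : (1 - X ^ 2) * derivative (derivative P) = -C μ * P) (i : ℕ) :
    derivative ((1 - X ^ 2) ^ (i + 1) * derivative^[i + 2] P) =
      C ((i + 1) * i - μ) * ((1 - X ^ 2) ^ i * derivative^[i + 1] P) := by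
  have h := iterate_derivative_ode hP (i + 1)
  simp only [derivative_mul, derivative_pow, derivative_one, derivative_X,
    ← Function.iterate_succ_apply' derivative, map_add, map_sub, map_mul, map_natCast, map_ofNat,
    map_one] at h ⊢
  push_cast at h ⊢
  linear_combination (1 - X ^ 2) ^ i * h

lemma eval_eq_zero_of_ode {P : ℂ[X]} {μ : ℂ} (hμ : μ ≠ 0)
    (hP : (1 - X ^ 2) * derivative (derivative P) = -C μ * P) {x : ℂ} (hx : x ^ 2 = 1) :
    P.eval x = 0 := by
  have h := congrArg (eval x) hP
  simp only [eval_mul, eval_sub, eval_one, eval_pow, eval_X, hx, sub_self, zero_mul, eval_neg,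
    eval_C, neg_mul, zero_eq_neg] at h
  exact (mul_eq_zero.1 h).resolve_left hμ

lemma one_sub_X_sq_dvd_of_ode {P : ℂ[X]} {μ : ℂ} (hμ : μ ≠ 0)
    (hP : (1 - X ^ 2) * derivative (derivative P) = -C μ * P) : (1 - X ^ 2) ∣ P := by
  have hroot : ∀ a : ℂ, a ^ 2 = 1 → X - C a ∣ P := fun a ha =>
    dvd_iff_isRoot.2 (eval_eq_zero_of_ode hμ hP ha)
  have hcop : IsCoprime (X - C (1 : ℂ)) (X - C (-1)) :=
    isCoprime_X_sub_C_of_isUnit_sub (by norm_num)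
  have hfac : (1 - X ^ 2 : ℂ[X]) = -((X - C 1) * (X - C (-1))) := by
    simp only [map_one, map_neg]; ring
  rw [hfac, neg_dvd]
  exact hcop.mul_dvd (hroot 1 (by norm_num)) (hroot (-1) (by norm_num))

noncomputable def leftDefiniteForm (j : ℕ) (P S : ℂ[X]) : ℂ :=
  ∫ x in Ioo (-1 : ℝ) 1, (derivative^[j] P).eval (x : ℂ) *
    star ((derivative^[j] S).eval (x : ℂ)) * ((1 - x ^ 2 : ℝ) : ℂ) ^ ((j : ℤ) - 1)

lemma star_leftDefiniteForm (j : ℕ) (P S : ℂ[X]) :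
    star (leftDefiniteForm j S P) = leftDefiniteForm j P S := by
  rw [leftDefiniteForm, leftDefiniteForm, Complex.star_def, ← integral_conj]
  refine congrArg _ (funext fun x => ?_)
  simp only [map_mul, map_zpow₀, Complex.conj_ofReal, ← Complex.star_def, star_star]
  ring

lemma leftDefiniteForm_zero_self (P : ℂ[X]) :
    leftDefiniteForm 0 P P =
      ((∫ x in Ioo (-1 : ℝ) 1, ‖P.eval (x : ℂ)‖ ^ 2 * (1 - x ^ 2)⁻¹ : ℝ) : ℂ) := by
  rw [leftDefiniteForm, ← integral_complex_ofReal]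
  refine congrArg _ (funext fun x => ?_)
  simp [Complex.mul_conj']

lemma leftDefiniteForm_zero_of_eq_mul {P R : ℂ[X]} (hPR : P = (1 - X ^ 2) * R) (S : ℂ[X]) :
    leftDefiniteForm 0 P S =
      ∫ x in Ioo (-1 : ℝ) 1, (R * S.map (starRingEnd ℂ)).eval (x : ℂ) := by
  refine setIntegral_congr_fun measurableSet_Ioo fun x ⟨hx1, hx2⟩ => ?_
  have hpos : ((1 - x ^ 2 : ℝ) : ℂ) ≠ 0 := Complex.ofReal_ne_zero.2 (by nlinarith)
  simp only [Function.iterate_zero, id_eq, CharP.cast_eq_zero, zero_sub, Int.reduceNeg, zpow_neg,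
    zpow_one, hPR, eval_mul, eval_sub, eval_one, eval_pow, eval_X, star_eval_ofReal]
  push_cast at hpos ⊢
  field_simp

lemma leftDefiniteForm_succ (i : ℕ) (P S : ℂ[X]) :
    leftDefiniteForm (i + 1) P S = ∫ x in Ioo (-1 : ℝ) 1,
      (derivative^[i + 1] P * derivative^[i + 1] (S.map (starRingEnd ℂ)) * (1 - X ^ 2) ^ i).eval
        (x : ℂ) := by
  refine congrArg _ (funext fun x => ?_)
  rw [star_eval_ofReal, ← iterate_derivative_map, show ((i + 1 : ℕ) : ℤ) - 1 = i by push_cast; ring,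
    zpow_natCast]
  simp

lemma leftDefiniteForm_succ_succ {P : ℂ[X]} {μ : ℂ}
    (hP : (1 - X ^ 2) * derivative (derivative P) = -C μ * P) (S : ℂ[X]) (i : ℕ) :
    leftDefiniteForm (i + 2) P S = (μ - (i + 1) * i) * leftDefiniteForm (i + 1) P S := by
  set S' := S.map (starRingEnd ℂ)
  set F := (1 - X ^ 2) ^ (i + 1) * derivative^[i + 2] P
  have hleft : derivative^[i + 1 + 1] P * derivative^[i + 1 + 1] S' * (1 - X ^ 2) ^ (i + 1) =
      F * derivative (derivative^[i + 1] S') := by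
    rw [Function.iterate_succ_apply' _ (i + 1) S']; ring
  have hright : derivative F * derivative^[i + 1] S' =
      C ((i + 1) * i - μ) * (derivative^[i + 1] P * derivative^[i + 1] S' * (1 - X ^ 2) ^ i) := by
    rw [derivative_one_sub_X_sq_pow_mul_iterate hP]; ring
  have hF : ∀ x : ℂ, x ^ 2 = 1 → (F * derivative^[i + 1] S').eval x = 0 := fun x hx => by
    simp [F, hx]
  rw [leftDefiniteForm_succ, leftDefiniteForm_succ, hleft,
    integral_Ioo_eval_mul_derivative _ _ (by norm_num), hright, integral_Ioo_eval_C_mul,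
    hF _ (by norm_num), hF _ (by norm_num)]
  ring

lemma leftDefiniteForm_one {P S : ℂ[X]} {μ : ℂ} (hμ : μ ≠ 0)
    (hP : (1 - X ^ 2) * derivative (derivative P) = -C μ * P)
    (hS : ∀ x : ℂ, x ^ 2 = 1 → S.eval x = 0) :
    leftDefiniteForm 1 P S = μ * leftDefiniteForm 0 P S := by
  obtain ⟨R, hR⟩ := one_sub_X_sq_dvd_of_ode hμ hP
  set S' := S.map (starRingEnd ℂ)
  have hS' : ∀ x : ℝ, x ^ 2 = 1 → (derivative P * S').eval (x : ℂ) = 0 := fun x hx => by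
    rw [eval_mul, ← star_eval_ofReal, hS _ (by exact_mod_cast hx), star_zero, mul_zero]
  have hPR : derivative (derivative P) = C (-μ) * R := by
    refine mul_left_cancel₀ (show (1 - X ^ 2 : ℂ[X]) ≠ 0 from fun h => ?_) ?_
    · simpa using congrArg (eval 0) h
    · rw [hP, hR, map_neg]; ring
  rw [leftDefiniteForm_succ, leftDefiniteForm_zero_of_eq_mul hR, pow_zero, mul_one, zero_add,
    Function.iterate_one, integral_Ioo_eval_mul_derivative _ _ (by norm_num),
    hS' 1 (by norm_num), hS' (-1) (by norm_num), hPR, mul_assoc,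
    integral_Ioo_eval_C_mul]
  ring

lemma leftDefiniteForm_eq_prod_mul {P S : ℂ[X]} {μ : ℂ} (hμ : μ ≠ 0)
    (hP : (1 - X ^ 2) * derivative (derivative P) = -C μ * P)
    (hS : ∀ x : ℂ, x ^ 2 = 1 → S.eval x = 0) (j : ℕ) :
    leftDefiniteForm j P S = (∏ i ∈ range j, (μ - i * (i - 1))) * leftDefiniteForm 0 P S := by
  induction j with
  | zero => simp
  | succ j ih =>
    rcases j with _ | i
    · simp [leftDefiniteForm_one hμ hP hS]
    · rw [leftDefiniteForm_succ_succ hP, ih, prod_range_succ _ (i + 1)]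
      push_cast
      ring

lemma leftDefiniteForm_zero_eq_zero {P S : ℂ[X]} {μ ν : ℂ} (hμ : μ ≠ 0) (hν : ν ≠ 0)
    (hμν : μ ≠ star ν) (hP : (1 - X ^ 2) * derivative (derivative P) = -C μ * P)
    (hS : (1 - X ^ 2) * derivative (derivative S) = -C ν * S) :
    leftDefiniteForm 0 P S = 0 := by
  have hPS := leftDefiniteForm_one hμ hP fun x hx => eval_eq_zero_of_ode hν hS hx
  have hSP := congrArg star (leftDefiniteForm_one hν hS fun x hx => eval_eq_zero_of_ode hμ hP hx)
  rw [star_leftDefiniteForm, star_mul', star_leftDefiniteForm] at hSP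
  exact (mul_eq_zero.1 (show (μ - star ν) * leftDefiniteForm 0 P S = 0 by
    linear_combination hSP - hPS)).resolve_left (sub_ne_zero.2 hμν)

theorem jacobi_left_definite_orthogonality_general (k : ℝ) (n : ℕ)
    (Q : ℕ → Polynomial ℂ)
    (heigen : ∀ m, 2 ≤ m →
      -(1 - Polynomial.X ^ 2) * Polynomial.derivative (Polynomial.derivative (Q m)) +
          Polynomial.C (k : ℂ) * Q m =
        Polynomial.C ((m : ℂ) * ((m : ℂ) - 1) + (k : ℂ)) * Q m)
    (hnorm : ∀ m, 2 ≤ m →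
      ∫ x in Ioo (-1 : ℝ) 1, ‖(Q m).eval (x : ℂ)‖ ^ 2 * (1 - x ^ 2)⁻¹ = 1) :
    ∀ m l, 2 ≤ m → 2 ≤ l →
      ∑ j ∈ Finset.range (n + 1),
        (cLD n j k : ℂ) * ∫ x in Ioo (-1 : ℝ) 1,
          (Polynomial.derivative^[j] (Q m)).eval (x : ℂ) *
            star ((Polynomial.derivative^[j] (Q l)).eval (x : ℂ)) *
            ((1 - x ^ 2 : ℝ) : ℂ) ^ ((j : ℤ) - 1) =
      if m = l then (((m : ℂ) * ((m : ℂ) - 1) + (k : ℂ)) ^ n) else 0 := by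
  intro m l hm hl
  have hode : ∀ i, 2 ≤ i →
      (1 - X ^ 2) * derivative (derivative (Q i)) = -C (jacobiNode i : ℂ) * Q i := fun i hi => by
    have h := heigen i hi
    rw [map_add] at h
    simp only [jacobiNode]; push_cast
    linear_combination -h
  have hμ : ∀ i, 2 ≤ i → (jacobiNode i : ℂ) ≠ 0 := fun i hi =>
    Complex.ofReal_ne_zero.2 (jacobiNode_ne_zero hi)
  have hform0 : leftDefiniteForm 0 (Q m) (Q l) = if m = l then 1 else 0 := by
    split_ifs with hml
    · rw [← hml, leftDefiniteForm_zero_self, hnorm m hm, Complex.ofReal_one]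
    · refine leftDefiniteForm_zero_eq_zero (hμ m hm) (hμ l hl) ?_ (hode m hm) (hode l hl)
      rw [Complex.star_def, Complex.conj_ofReal, Ne, Complex.ofReal_inj]
      exact jacobiNode_injOn.ne (by simp; omega) (by simp; omega) hml
  calc ∑ j ∈ range (n + 1), (cLD n j k : ℂ) * leftDefiniteForm j (Q m) (Q l)
      = ((∑ j ∈ range (n + 1), cLD n j k * ∏ i ∈ range j, (jacobiNode m - jacobiNode i) : ℝ) : ℂ) *
          leftDefiniteForm 0 (Q m) (Q l) := by
        push_cast [sum_mul, jacobiNode]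
        refine sum_congr rfl fun j _ => ?_
        rw [leftDefiniteForm_eq_prod_mul (hμ m hm) (hode m hm)
          (fun x hx => eval_eq_zero_of_ode (hμ l hl) (hode l hl) hx)]
        simp only [jacobiNode]
        push_cast
        ring
    _ = _ := by
        rw [sum_cLD_mul_prod, hform0]
        split_ifs <;> simp [jacobiNode]

/-- Let `k > 0`, `n ∈ ℕ`, and for each `m ≥ 2` let `Q m` be a degree-`m` polynomial
eigenfunction, `-(1-x²)(Q m)'' + k·(Q m) = (m(m-1)+k)·(Q m)`, normalized in
`L²((-1,1); (1-x²)⁻¹ dx)`.  Then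
`Σ_{j=0}^{n} c_j(n,k) ∫ (Q m)^{(j)} conj((Q l)^{(j)}) (1-x²)^{j-1} dx
  = (m(m-1)+k)ⁿ δ_{ml}`. -/
theorem jacobi_left_definite_orthogonality (k : ℝ) (hk : 0 < k) (n : ℕ) (hn : 1 ≤ n)
    (Q : ℕ → Polynomial ℂ)
    (hdeg : ∀ m, 2 ≤ m → (Q m).natDegree = m)
    (heigen : ∀ m, 2 ≤ m →
      -(1 - Polynomial.X ^ 2) * Polynomial.derivative (Polynomial.derivative (Q m)) +
          Polynomial.C (k : ℂ) * Q m =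
        Polynomial.C ((m : ℂ) * ((m : ℂ) - 1) + (k : ℂ)) * Q m)
    (hnorm : ∀ m, 2 ≤ m →
      ∫ x in Ioo (-1 : ℝ) 1, ‖(Q m).eval (x : ℂ)‖ ^ 2 * (1 - x ^ 2)⁻¹ = 1) :
    ∀ m l, 2 ≤ m → 2 ≤ l →
      ∑ j ∈ Finset.range (n + 1),
        (cLD n j k : ℂ) * ∫ x in Ioo (-1 : ℝ) 1,
          (Polynomial.derivative^[j] (Q m)).eval (x : ℂ) *
            star ((Polynomial.derivative^[j] (Q l)).eval (x : ℂ)) *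
            ((1 - x ^ 2 : ℝ) : ℂ) ^ ((j : ℤ) - 1) =
      if m = l then (((m : ℂ) * ((m : ℂ) - 1) + (k : ℂ)) ^ n) else 0 :=
  jacobi_left_definite_orthogonality_general k n Q heigen hnorm
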